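/- Let F be a field of characteristic different from 2. Then there do not exist 7 pairwise distinct lines in ℙ²(F) having 7 triple points. -/

import Mathlib

/-!
The seven triple points account for `7 · 3 = 21 = C(7,2)` pairs of lines, and two lines meet
only once, so any two of the seven lines meet at a triple point. Concurrency is therefore a Steiner
triple system on the seven lines, i.e. they form a Fano plane: there are four of them, `a, b, c, d`,
no three concurrent, such that the diagonals of the quadrilateral they form (`x` through `a ∩ b` and
`c ∩ d`, `y` through `a ∩ c` and `b ∩ d`, `z` through `a ∩ d` and `b ∩ c`) are also among the seven
and are concurrent. In coordinates the diagonals are multiples of `(a × b) × (c × d)`,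
`(a × c) × (b × d)` and `(a × d) × (b × c)`, whose determinant is `-2 [abc] [abd] [acd] [bcd] ≠ 0`.
-/

/-- The projective plane over `F` (also used, by duality, for the lines of that plane). -/
abbrev ProjPlane (F : Type*) [Field F] := Projectivization F (Fin 3 → F)

/-- The point `P` lies on the line `L` (a line is recorded by the projective class of the
coefficient vector of a defining linear form): the pairing of representatives vanishes.
This does not depend on the choice of representatives. -/
def OnLine {F : Type*} [Field F] (P L : ProjPlane F) : Prop :=
  dotProduct P.rep L.rep = 0

/-- The multiplicity of a point `P` with respect to a configuration `lines`:
the number of lines of the configuration passing through `P`. -/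
noncomputable def mult {F : Type*} [Field F] (lines : Set (ProjPlane F))
    (P : ProjPlane F) : ℕ :=
  {L ∈ lines | OnLine P L}.ncard

open Finset Matrix Projectivization

theorem List.Nodup.mem_of_length_eq_card {α : Type*} [Fintype α] {l : List α} (hl : l.Nodup)
    (hlen : l.length = Fintype.card α) (w : α) : w ∈ l := by
  classical
  have hl : l.toFinset = Finset.univ :=
    Finset.eq_univ_of_card _ (by rw [List.toFinset_card_of_nodup hl, hlen])
  exact List.mem_toFinset.1 (hl ▸ Finset.mem_univ w)

/-- `μ u v` is the third point of the block through `u ≠ v` of a Steiner triple system. -/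
structure IsSteinerQuasigroup {Q : Type*} (μ : Q → Q → Q) : Prop where
  comm : ∀ x y, μ x y = μ y x
  idem : ∀ x, μ x x = x
  mul_mul_cancel_left : ∀ x y, μ x (μ x y) = y

namespace IsSteinerQuasigroup

variable {Q : Type*} {μ : Q → Q → Q}

theorem mul_mul_cancel_left' (h : IsSteinerQuasigroup μ) (x y : Q) : μ y (μ x y) = x := by
  rw [h.comm x, h.mul_mul_cancel_left]

theorem mul_mul_cancel_right (h : IsSteinerQuasigroup μ) (x y : Q) : μ (μ x y) y = x := by
  rw [h.comm, h.mul_mul_cancel_left']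

theorem mul_mul_cancel_right' (h : IsSteinerQuasigroup μ) (x y : Q) : μ (μ x y) x = y := by
  rw [h.comm, h.mul_mul_cancel_left]

theorem eq_mul_of_mul_eq_right (h : IsSteinerQuasigroup μ) {x y z : Q} (e : μ x y = z) :
    y = μ x z := by
  rw [← e, h.mul_mul_cancel_left]

theorem eq_mul_of_mul_eq_left (h : IsSteinerQuasigroup μ) {x y z : Q} (e : μ x y = z) :
    x = μ y z := by
  rw [← e, h.mul_mul_cancel_left']

theorem left_ne_mul (h : IsSteinerQuasigroup μ) {x y : Q} (hxy : x ≠ y) : x ≠ μ x y :=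
  fun e => hxy (by rw [h.eq_mul_of_mul_eq_right e.symm, h.idem])

theorem right_ne_mul (h : IsSteinerQuasigroup μ) {x y : Q} (hxy : x ≠ y) : y ≠ μ x y :=
  fun e => hxy (by rw [h.eq_mul_of_mul_eq_left e.symm, h.idem])

theorem mul_left_injective (h : IsSteinerQuasigroup μ) (a : Q) : Function.Injective (μ a) :=
  fun u v huv => by rw [h.eq_mul_of_mul_eq_right huv, h.mul_mul_cancel_left]

theorem nodup_of_notMem_line (h : IsSteinerQuasigroup μ) {a x y : Q} (hxy : x ≠ y)
    (hax : a ≠ x) (hay : a ≠ y) (haz : a ≠ μ x y) :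
    [a, μ a x, μ a y, μ a (μ x y), x, y, μ x y].Nodup := by
  set l := [x, y, μ x y]
  have hl : l.Nodup := by simp [l, hxy, h.left_ne_mul hxy, h.right_ne_mul hxy]
  have hclosed : ∀ u ∈ l, ∀ v ∈ l, μ u v ∈ l := by
    simp [l, h.idem, h.mul_mul_cancel_left, h.mul_mul_cancel_left', h.mul_mul_cancel_right,
      h.mul_mul_cancel_right', h.comm y x]
  have ha : a ∉ l := by simp [l, hax, hay, haz]
  -- `[a, μ a x, μ a y, μ a (μ x y)]` is the image of `a :: l` under the injection `μ a`, and it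
  -- misses `l` because `l` is closed under `μ` while `a ∉ l`.
  have hsplit : [a, μ a x, μ a y, μ a (μ x y), x, y, μ x y] = (a :: l).map (μ a) ++ l := by
    simp [l, h.idem]
  rw [hsplit, List.nodup_append]
  refine ⟨(List.nodup_cons.2 ⟨ha, hl⟩).map (h.mul_left_injective a), hl, ?_⟩
  rintro _ hw v hv e
  obtain ⟨u, hu, rfl⟩ := List.mem_map.1 hw
  rcases List.mem_cons.1 hu with hu | hu
  · rw [hu, h.idem] at e
    exact ha (e ▸ hv)
  · exact ha (h.eq_mul_of_mul_eq_right ((h.comm u a).trans e) ▸ hclosed u hu v hv)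

theorem mul_mul_mul_of_card_eq_seven [Fintype Q] (h : IsSteinerQuasigroup μ)
    (hQ : Fintype.card Q = 7) {a x y : Q} (hxy : x ≠ y) (hax : a ≠ x) (hay : a ≠ y)
    (haz : a ≠ μ x y) : μ (μ a x) (μ a y) = μ x y := by
  have hnd := h.nodup_of_notMem_line hxy hax hay haz
  have hmem := hnd.mem_of_length_eq_card (by simp [hQ])
  simp only [List.nodup_cons, List.mem_cons, List.not_mem_nil, or_false, List.nodup_nil,
    not_or, not_false_eq_true, and_true] at hnd
  obtain ⟨⟨hab, hac, -, -, -, -⟩, ⟨hbc, -, hbx, hby, -⟩, ⟨-, hcx, hcy, -⟩, -⟩ := hnd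
  -- With `b = μ a x`, `c = μ a y`, `d = μ a (μ x y)`, cancelling excludes every other value of
  -- `μ b y`, and then of `μ b c`; the first identity `μ b y = d` is what excludes `μ b c = d`.
  have hbyd : μ (μ a x) y = μ a (μ x y) := by
    rcases by simpa using hmem (μ (μ a x) y) with hw | hw | hw | hw | hw | hw | hw
    · exact absurd (by simpa [h.mul_mul_cancel_right'] using h.eq_mul_of_mul_eq_right hw) hxy.symm
    · exact absurd (by simpa [h.idem] using h.eq_mul_of_mul_eq_right hw) (Ne.symm hby)
    · exact absurd (by simpa [h.mul_mul_cancel_left'] using h.eq_mul_of_mul_eq_left hw)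
        (Ne.symm hab)
    · exact hw
    · exact absurd (by simpa [h.mul_mul_cancel_right] using h.eq_mul_of_mul_eq_right hw) hay.symm
    · exact absurd (by simpa [h.idem] using h.eq_mul_of_mul_eq_left hw) hby
    · exact absurd (by simpa [h.mul_mul_cancel_left'] using h.eq_mul_of_mul_eq_left hw) hbx
  rcases by simpa using hmem (μ (μ a x) (μ a y)) with hw | hw | hw | hw | hw | hw | hw
  · exact absurd (by simpa [h.mul_mul_cancel_right'] using h.eq_mul_of_mul_eq_right hw) hcx
  · exact absurd (by simpa [h.idem] using h.eq_mul_of_mul_eq_right hw) (Ne.symm hbc)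
  · exact absurd (by simpa [h.idem] using h.eq_mul_of_mul_eq_left hw) hbc
  · exact absurd (h.mul_left_injective _ (hw.trans hbyd.symm)) hcy
  · exact absurd (by simpa [h.mul_mul_cancel_right] using h.eq_mul_of_mul_eq_right hw) (Ne.symm hac)
  · exact absurd (by simpa [h.mul_mul_cancel_right] using h.eq_mul_of_mul_eq_left hw) (Ne.symm hab)
  · exact hw

end IsSteinerQuasigroup

/-- `C u v w`: the points `u, v, w` lie in a common block (always true when `u = v`). -/
structure IsSteinerTripleSystem {α : Type*} (C : α → α → α → Prop) : Prop where
  swap₁₂ : ∀ u v w, C u v w → C v u w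
  swap₂₃ : ∀ u v w, C u v w → C u w v
  refl : ∀ u w, C u u w
  exists_third : ∀ u v, u ≠ v → ∃ w, w ≠ u ∧ w ≠ v ∧ C u v w
  unique_third : ∀ u v w w', u ≠ v → w ≠ u → w ≠ v → w' ≠ u → w' ≠ v → C u v w → C u v w' →
    w = w'

namespace IsSteinerTripleSystem

variable {α : Type*} {C : α → α → α → Prop}

theorem exists_isSteinerQuasigroup (hC : IsSteinerTripleSystem C) :
    ∃ μ : α → α → α, IsSteinerQuasigroup μ ∧
      ∀ u v w, C u v w ↔ u = v ∨ w = u ∨ w = v ∨ w = μ u v := by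
  classical
  choose! t hne₁ hne₂ ht using hC.exists_third
  set μ := fun u v => if u = v then u else t u v with hμ
  have hμ_ne : ∀ {u v}, u ≠ v → μ u v ≠ u ∧ μ u v ≠ v ∧ C u v (μ u v) := fun huv => by
    simp only [hμ, if_neg huv]
    exact ⟨hne₁ _ _ huv, hne₂ _ _ huv, ht _ _ huv⟩
  have hμ_eq : ∀ {u v w}, u ≠ v → w ≠ u → w ≠ v → C u v w → w = μ u v :=
    fun huv hwu hwv hw => hC.unique_third _ _ _ _ huv hwu hwv (hμ_ne huv).1 (hμ_ne huv).2.1 hw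
      (hμ_ne huv).2.2
  have comm : ∀ u v, μ u v = μ v u := by
    intro u v
    by_cases huv : u = v
    · rw [huv]
    obtain ⟨h₁, h₂, h₃⟩ := hμ_ne huv
    exact hμ_eq (Ne.symm huv) h₂ h₁ (hC.swap₁₂ _ _ _ h₃)
  have idem : ∀ u, μ u u = u := fun u => if_pos rfl
  have cancel : ∀ u v, μ u (μ u v) = v := by
    intro u v
    by_cases huv : u = v
    · rw [huv, idem, idem]
    obtain ⟨h₁, h₂, h₃⟩ := hμ_ne huv
    exact (hμ_eq (Ne.symm h₁) (Ne.symm huv) (Ne.symm h₂) (hC.swap₂₃ _ _ _ h₃)).symm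
  refine ⟨μ, ⟨comm, idem, cancel⟩, fun u v w => ⟨fun hw => ?_, ?_⟩⟩
  · by_contra! hne
    exact hne.2.2.2 (hμ_eq hne.1 hne.2.1 hne.2.2.1 hw)
  · rintro (rfl | rfl | rfl | rfl)
    · exact hC.refl u w
    · exact hC.swap₂₃ _ _ _ (hC.refl w v)
    · exact hC.swap₁₂ _ _ _ (hC.swap₂₃ _ _ _ (hC.refl w u))
    · by_cases huv : u = v
      · subst huv; rw [idem]; exact hC.refl u u
      · exact (hμ_ne huv).2.2

theorem exists_fano [Fintype α] (hC : IsSteinerTripleSystem C) (hα : Fintype.card α = 7) :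
    ∃ a b c d x y z : α, C a b x ∧ C c d x ∧ C a c y ∧ C b d y ∧ C a d z ∧ C b c z ∧ C x y z ∧
      ¬ C a b c ∧ ¬ C a b d ∧ ¬ C a c d ∧ ¬ C b c d := by
  obtain ⟨μ, hμ, hC⟩ := hC.exists_isSteinerQuasigroup
  obtain ⟨x, y, hxy⟩ := Fintype.exists_pair_of_one_lt_card (by omega : 1 < Fintype.card α)
  obtain ⟨a, ha⟩ := Cardinal.exists_notMem_of_length_lt [x, y, μ x y]
    (by simp [Cardinal.mk_fintype, hα]; norm_num)
  simp only [List.mem_cons, List.not_mem_nil, or_false, not_or] at ha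
  obtain ⟨hax, hay, haz⟩ := ha
  -- The quadrangle is `a` together with the third points of the blocks joining it to the block
  -- `{x, y, μ x y}`, which supplies the three diagonals.
  have hbc : μ (μ a x) (μ a y) = μ x y := hμ.mul_mul_mul_of_card_eq_seven hα hxy hax hay haz
  have hbd : μ (μ a x) (μ a (μ x y)) = y := by
    rw [hμ.mul_mul_mul_of_card_eq_seven hα (hμ.left_ne_mul hxy) hax haz
      (by rwa [hμ.mul_mul_cancel_left]), hμ.mul_mul_cancel_left]
  have hcd : μ (μ a y) (μ a (μ x y)) = x := by
    rw [hμ.mul_mul_mul_of_card_eq_seven hα (hμ.right_ne_mul hxy) hay haz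
      (by rwa [hμ.mul_mul_cancel_left']), hμ.mul_mul_cancel_left']
  refine ⟨a, μ a x, μ a y, μ a (μ x y), x, y, μ x y, ?_⟩
  have hnd := hμ.nodup_of_notMem_line hxy hax hay haz
  simp only [List.nodup_cons, List.mem_cons, List.not_mem_nil, or_false, List.nodup_nil,
    not_or, not_false_eq_true, and_true] at hnd
  simp only [hC, hμ.mul_mul_cancel_left, hbc, hbd, hcd]
  grind

end IsSteinerTripleSystem

section Geometry

variable {F : Type*} [Field F]

theorem onLine_iff_orthogonal {P L : ProjPlane F} : OnLine P L ↔ P.orthogonal L := by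
  conv_rhs => rw [← P.mk_rep, ← L.mk_rep]
  exact (orthogonal_mk _ _).symm

theorem onLine_mk_iff {v : Fin 3 → F} (hv : v ≠ 0) {L : ProjPlane F} :
    OnLine (mk F v hv) L ↔ v ⬝ᵥ L.rep = 0 := by
  conv_lhs => rw [onLine_iff_orthogonal, ← L.mk_rep]
  exact orthogonal_mk _ _

theorem mk_eq_mk_cross {u v x : Fin 3 → F} (hx : x ≠ 0) (huv : u ⨯₃ v ≠ 0) (hu : u ⬝ᵥ x = 0)
    (hv : v ⬝ᵥ x = 0) : mk F x hx = mk F (u ⨯₃ v) huv := by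
  rw [mk_eq_mk_iff_crossProduct_eq_zero, cross_cross_eq_smul_sub_smul', dotProduct_comm x v, hu,
    hv, zero_smul, zero_smul, sub_zero]

theorem eq_or_eq_of_onLine {P Q L M : ProjPlane F} (hPL : OnLine P L) (hPM : OnLine P M)
    (hQL : OnLine Q L) (hQM : OnLine Q M) : P = Q ∨ L = M := by
  refine or_iff_not_imp_left.2 fun hPQ => ?_
  have hPQ' : P.rep ⨯₃ Q.rep ≠ 0 := by
    rwa [Ne, ← mk_eq_mk_iff_crossProduct_eq_zero P.rep_nonzero Q.rep_nonzero, mk_rep, mk_rep]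
  rw [← L.mk_rep, ← M.mk_rep, mk_eq_mk_cross _ hPQ' hPL hQL, mk_eq_mk_cross _ hPQ' hPM hQM]

def Concurrent (L₁ L₂ L₃ : ProjPlane F) : Prop :=
  ∃ P, OnLine P L₁ ∧ OnLine P L₂ ∧ OnLine P L₃

theorem concurrent_iff_det_eq_zero {L₁ L₂ L₃ : ProjPlane F} :
    Concurrent L₁ L₂ L₃ ↔ (of ![L₁.rep, L₂.rep, L₃.rep]).det = 0 := by
  rw [← exists_mulVec_eq_zero_iff]
  have key : ∀ v, of ![L₁.rep, L₂.rep, L₃.rep] *ᵥ v = 0 ↔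
      v ⬝ᵥ L₁.rep = 0 ∧ v ⬝ᵥ L₂.rep = 0 ∧ v ⬝ᵥ L₃.rep = 0 := by
    intro v
    simp [funext_iff, Fin.forall_fin_succ, dotProduct_comm v]
  simp_rw [key]
  constructor
  · rintro ⟨P, h⟩
    exact ⟨P.rep, P.rep_nonzero, h⟩
  · rintro ⟨v, hv, h⟩
    exact ⟨mk F v hv, by simpa only [onLine_mk_iff] using h⟩

theorem cross_dotProduct_eq_det (a b x : Fin 3 → F) : (a ⨯₃ b) ⬝ᵥ x = (of ![a, b, x]).det := by
  rw [dotProduct_comm, triple_product_permutation, triple_product_eq_det]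
  rfl

theorem det_cross_cross (a b c d : Fin 3 → F) :
    (of ![(a ⨯₃ b) ⨯₃ (c ⨯₃ d), (a ⨯₃ c) ⨯₃ (b ⨯₃ d), (a ⨯₃ d) ⨯₃ (b ⨯₃ c)]).det =
      -2 * (of ![a, b, c]).det * (of ![a, b, d]).det * (of ![a, c, d]).det *
        (of ![b, c, d]).det := by
  simp only [det_fin_three, cross_apply, of_apply, Matrix.cons_val, cons_val_zero, cons_val_one]
  ring

theorem exists_smul_cross_cross {a b c d x : Fin 3 → F} (hx : x ≠ 0)
    (h : (a ⨯₃ b) ⨯₃ (c ⨯₃ d) ≠ 0) (habx : (of ![a, b, x]).det = 0)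
    (hcdx : (of ![c, d, x]).det = 0) : ∃ s : F, s • ((a ⨯₃ b) ⨯₃ (c ⨯₃ d)) = x :=
  (mk_eq_mk_iff' F _ _ hx h).1 <|
    mk_eq_mk_cross hx h (by rwa [cross_dotProduct_eq_det]) (by rwa [cross_dotProduct_eq_det])

theorem det_ne_zero_of_diagonals (h2 : (2 : F) ≠ 0) {a b c d x y z : Fin 3 → F} (hx : x ≠ 0)
    (hy : y ≠ 0) (hz : z ≠ 0) (habc : (of ![a, b, c]).det ≠ 0) (habd : (of ![a, b, d]).det ≠ 0)
    (hacd : (of ![a, c, d]).det ≠ 0) (hbcd : (of ![b, c, d]).det ≠ 0)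
    (habx : (of ![a, b, x]).det = 0) (hcdx : (of ![c, d, x]).det = 0)
    (hacy : (of ![a, c, y]).det = 0) (hbdy : (of ![b, d, y]).det = 0)
    (hadz : (of ![a, d, z]).det = 0) (hbcz : (of ![b, c, z]).det = 0) :
    (of ![x, y, z]).det ≠ 0 := by
  set D := of ![(a ⨯₃ b) ⨯₃ (c ⨯₃ d), (a ⨯₃ c) ⨯₃ (b ⨯₃ d), (a ⨯₃ d) ⨯₃ (b ⨯₃ c)] with hD_def
  have hD : D.det ≠ 0 := by
    rw [hD_def, det_cross_cross]
    exact mul_ne_zero (mul_ne_zero (mul_ne_zero (mul_ne_zero (neg_ne_zero.2 h2) habc) habd) hacd)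
      hbcd
  have hrow : ∀ i, D i ≠ 0 := fun i h0 => hD (det_eq_zero_of_row_eq_zero i fun j => congrFun h0 j)
  obtain ⟨s, rfl⟩ := exists_smul_cross_cross hx (hrow 0) habx hcdx
  obtain ⟨t, rfl⟩ := exists_smul_cross_cross hy (hrow 1) hacy hbdy
  obtain ⟨r, rfl⟩ := exists_smul_cross_cross hz (hrow 2) hadz hbcz
  have hscale : ∀ u v w : Fin 3 → F,
      (of ![s • u, t • v, r • w]).det = s * t * r * (of ![u, v, w]).det := by
    intro u v w
    simp only [det_fin_three, of_apply, Matrix.cons_val, cons_val_zero, cons_val_one,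
      Pi.smul_apply, smul_eq_mul]
    ring
  rw [hscale]
  exact mul_ne_zero (mul_ne_zero (mul_ne_zero (left_ne_zero_of_smul hx)
    (left_ne_zero_of_smul hy)) (left_ne_zero_of_smul hz)) hD

theorem not_concurrent_diagonals (h2 : (2 : F) ≠ 0) {a b c d x y z : ProjPlane F}
    (habc : ¬ Concurrent a b c) (habd : ¬ Concurrent a b d) (hacd : ¬ Concurrent a c d)
    (hbcd : ¬ Concurrent b c d) (habx : Concurrent a b x) (hcdx : Concurrent c d x)
    (hacy : Concurrent a c y) (hbdy : Concurrent b d y) (hadz : Concurrent a d z)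
    (hbcz : Concurrent b c z) : ¬ Concurrent x y z := by
  simp only [concurrent_iff_det_eq_zero] at *
  exact det_ne_zero_of_diagonals h2 x.rep_nonzero y.rep_nonzero z.rep_nonzero habc habd hacd hbcd
    habx hcdx hacy hbdy hadz hbcz

open scoped Classical in
noncomputable def linesThrough (Λ : Finset (ProjPlane F)) (P : ProjPlane F) :
    Finset (ProjPlane F) :=
  {L ∈ Λ | OnLine P L}

theorem mem_linesThrough {Λ : Finset (ProjPlane F)} {P L : ProjPlane F} :
    L ∈ linesThrough Λ P ↔ L ∈ Λ ∧ OnLine P L := by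
  simp [linesThrough]

theorem exists_mem_onLine_onLine {Λ T : Finset (ProjPlane F)}
    (hcover : #Λ.offDiag ≤ ∑ P ∈ T, #(linesThrough Λ P).offDiag) {u v : ProjPlane F}
    (hu : u ∈ Λ) (hv : v ∈ Λ) (huv : u ≠ v) : ∃ P ∈ T, OnLine P u ∧ OnLine P v := by
  classical
  set pairs := fun P => (linesThrough Λ P).offDiag
  have hdisj : (T : Set (ProjPlane F)).PairwiseDisjoint pairs := by
    intro P _ Q _ hPQ
    refine disjoint_left.2 fun ⟨L, M⟩ hP hQ => ?_
    simp only [pairs, mem_offDiag, mem_linesThrough] at hP hQ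
    exact hP.2.2 ((eq_or_eq_of_onLine hP.1.2 hP.2.1.2 hQ.1.2 hQ.2.1.2).resolve_left hPQ)
  have hsub : T.biUnion pairs ⊆ Λ.offDiag := by
    intro p hp
    obtain ⟨P, -, hp⟩ := mem_biUnion.1 hp
    simp only [pairs, mem_offDiag, mem_linesThrough] at hp ⊢
    exact ⟨hp.1.1, hp.2.1.1, hp.2.2⟩
  have heq := eq_of_subset_of_card_le hsub (by rwa [card_biUnion hdisj])
  have huv' : (u, v) ∈ Λ.offDiag := mem_offDiag.2 ⟨hu, hv, huv⟩
  obtain ⟨P, hP, huvP⟩ := mem_biUnion.1 (heq ▸ huv')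
  simp only [pairs, mem_offDiag, mem_linesThrough] at huvP
  exact ⟨P, hP, huvP.1.2, huvP.2.1.2⟩

theorem isSteinerTripleSystem_concurrent {Λ T : Finset (ProjPlane F)}
    (hcover : #Λ.offDiag ≤ ∑ P ∈ T, #(linesThrough Λ P).offDiag)
    (hT : ∀ P ∈ T, #(linesThrough Λ P) = 3) :
    IsSteinerTripleSystem fun u v w : Λ => Concurrent (u : ProjPlane F) v w where
  swap₁₂ _ _ _ := fun ⟨P, h₁, h₂, h₃⟩ => ⟨P, h₂, h₁, h₃⟩
  swap₂₃ _ _ _ := fun ⟨P, h₁, h₂, h₃⟩ => ⟨P, h₁, h₃, h₂⟩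
  refl _ _ := concurrent_iff_det_eq_zero.2 (det_zero_of_row_eq (i := 0) (j := 1) (by decide) rfl)
  exists_third u v huv := by
    classical
    obtain ⟨P, hP, hPu, hPv⟩ :=
      exists_mem_onLine_onLine hcover u.2 v.2 (Subtype.coe_ne_coe.2 huv)
    obtain ⟨w, hw, hwuv⟩ := exists_mem_notMem_of_card_lt_card (s := {u.1, v.1})
      (t := linesThrough Λ P) (by rw [hT P hP]; exact card_le_two.trans_lt (by norm_num))
    rw [mem_linesThrough] at hw
    simp only [mem_insert, mem_singleton, not_or] at hwuv
    exact ⟨⟨w, hw.1⟩, Subtype.coe_ne_coe.1 hwuv.1, Subtype.coe_ne_coe.1 hwuv.2,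
      P, hPu, hPv, hw.2⟩
  unique_third u v w w' huv hwu hwv hw'u hw'v := by
    classical
    rintro ⟨P, hPu, hPv, hPw⟩ ⟨P', hP'u, hP'v, hP'w'⟩
    have huv' : (u : ProjPlane F) ≠ v := Subtype.coe_ne_coe.2 huv
    obtain ⟨Q, hQ, hQu, hQv⟩ := exists_mem_onLine_onLine hcover u.2 v.2 huv'
    rw [(eq_or_eq_of_onLine hPu hPv hQu hQv).resolve_right huv'] at hPw
    rw [(eq_or_eq_of_onLine hP'u hP'v hQu hQv).resolve_right huv'] at hP'w'
    have hthird : #(linesThrough Λ Q \ {u.1, v.1}) ≤ 1 := by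
      rw [card_sdiff_of_subset (by simp [insert_subset_iff, mem_linesThrough, hQu, hQv]),
        hT Q hQ, card_pair huv']
    exact Subtype.ext <| card_le_one.1 hthird _ (by simp [mem_linesThrough, hPw, hwu, hwv]) _
      (by simp [mem_linesThrough, hP'w', hw'u, hw'v])

theorem mult_eq_card_linesThrough {lines : Set (ProjPlane F)} (hfin : lines.Finite)
    (P : ProjPlane F) : mult lines P = #(linesThrough hfin.toFinset P) := by
  rw [mult, ← Set.ncard_coe_finset]
  congr
  ext L
  simp [mem_linesThrough]

end Geometry

/-- Over a field of characteristic different from `2` there is no configuration of `7`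
pairwise distinct lines in `ℙ²(F)` with `7` triple points. -/
theorem no_seven_lines_seven_triple_points (F : Type*) [Field F] (hchar : ringChar F ≠ 2) :
    ¬ ∃ lines : Set (ProjPlane F),
        lines.ncard = 7 ∧
        {P : ProjPlane F | mult lines P = 3}.ncard = 7 := by
  rintro ⟨lines, hlines, htriple⟩
  have hfin : lines.Finite := Set.finite_of_ncard_ne_zero (by omega)
  have hTfin : {P : ProjPlane F | mult lines P = 3}.Finite :=
    Set.finite_of_ncard_ne_zero (by omega)
  set Λ := hfin.toFinset
  set T := hTfin.toFinset
  have hΛ : #Λ = 7 := by rwa [← Set.ncard_eq_toFinset_card _ hfin]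
  have hT : #T = 7 := by rwa [← Set.ncard_eq_toFinset_card _ hTfin]
  have hmult : ∀ P ∈ T, #(linesThrough Λ P) = 3 := fun P hP => by
    rw [← mult_eq_card_linesThrough]
    simpa [T] using hP
  have hcover : #Λ.offDiag ≤ ∑ P ∈ T, #(linesThrough Λ P).offDiag := by
    rw [sum_congr rfl fun P hP => by rw [offDiag_card, hmult P hP]]
    simp [offDiag_card, hΛ, hT]
  obtain ⟨a, b, c, d, x, y, z, habx, hcdx, hacy, hbdy, hadz, hbcz, hxyz, habc, habd, hacd, hbcd⟩ :=
    (isSteinerTripleSystem_concurrent hcover hmult).exists_fano (by simp [hΛ])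
  exact not_concurrent_diagonals (Ring.two_ne_zero hchar) habc habd hacd hbcd habx hcdx hacy hbdy
    hadz hbcz hxyz
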